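/- In System F, a closed normal λ-term t has type B = ∀X.(X → X → X) if and only if t = λx.λy.x or t = λx.λy.y. -/

import Mathlib

inductive Lam : Type
  | var : ℕ → Lam
  | app : Lam → Lam → Lam
  | lam : Lam → Lam
deriving DecidableEq

namespace Lam

/-- Lift (shift up by one) all de Bruijn indices ≥ d. -/
def lift (d : ℕ) : Lam → Lam
  | var n => if n < d then var n else var (n + 1)
  | app u v => app (lift d u) (lift d v)
  | lam u => lam (lift (d + 1) u)

/-- Capture-avoiding substitution of s for the de Bruijn index d. -/
def subst (d : ℕ) (s : Lam) : Lam → Lam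
  | var n => if n = d then s else if n < d then var n else var (n - 1)
  | app u v => app (subst d s u) (subst d s v)
  | lam u => lam (subst (d + 1) (lift 0 s) u)

/-- One-step β-reduction. -/
inductive Step : Lam → Lam → Prop
  | beta (u v : Lam) : Step (app (lam u) v) (subst 0 v u)
  | appL {u u' : Lam} (v : Lam) : Step u u' → Step (app u v) (app u' v)
  | appR (u : Lam) {v v' : Lam} : Step v v' → Step (app u v) (app u v')
  | lam {u u' : Lam} : Step u u' → Step (lam u) (lam u')

/-- β-equivalence: the reflexive-symmetric-transitive closure of β-reduction. -/
inductive BetaEq : Lam → Lam → Prop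
  | step {u v} : Step u v → BetaEq u v
  | refl (u) : BetaEq u u
  | symm {u v} : BetaEq u v → BetaEq v u
  | trans {u v w} : BetaEq u v → BetaEq v w → BetaEq u w

/-- One step of head reduction: contract the head redex. -/
inductive HeadStep : Lam → Lam → Prop
  | beta (u v : Lam) : HeadStep (app (lam u) v) (subst 0 v u)
  | appL {u u' : Lam} (v : Lam) : HeadStep u u' → (∀ w, u ≠ lam w) →
      HeadStep (app u v) (app u' v)
  | lam {u u' : Lam} : HeadStep u u' → HeadStep (lam u) (lam u')

/-- `Heads u v`: u head-reduces to v in finitely many steps. -/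
def Heads : Lam → Lam → Prop := Relation.ReflTransGen HeadStep

/-- A term is normal if it contains no β-redex. -/
def Normal (t : Lam) : Prop := ∀ u, ¬ Step t u

/-- All free de Bruijn indices of the term are < d. -/
def ClosedUnder : ℕ → Lam → Prop
  | d, var n => n < d
  | d, app u v => ClosedUnder d u ∧ ClosedUnder d v
  | d, lam u => ClosedUnder (d + 1) u

/-- A term is closed if it has no free variables. -/
def Closed (t : Lam) : Prop := ClosedUnder 0 t

/-- The de Bruijn index i occurs free in the term. -/
def FreeIn : ℕ → Lam → Prop
  | i, var n => n = i
  | i, app u v => FreeIn i u ∨ FreeIn i v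
  | i, lam u => FreeIn (i + 1) u

/-- n-fold application: (f^n x). -/
def iterApp : ℕ → Lam → Lam → Lam
  | 0, _, x => x
  | n + 1, f, x => app f (iterApp n f x)

/-- The n-th Church numeral λx.λf.(f^n x). -/
def church (n : ℕ) : Lam := lam (lam (iterApp n (var 0) (var 1)))

/-- T = λx.λy.x -/
def Ttm : Lam := lam (lam (var 1))

/-- F = λx.λy.y -/
def Ftm : Lam := lam (lam (var 0))

end Lam

/-- Types / formulas of System F, with de Bruijn type variables. -/
inductive Ty : Type
  | var : ℕ → Ty
  | bot : Ty
  | arrow : Ty → Ty → Ty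
  | all : Ty → Ty
deriving DecidableEq

namespace Ty

def lift (d : ℕ) : Ty → Ty
  | var n => if n < d then var n else var (n + 1)
  | bot => bot
  | arrow a b => arrow (lift d a) (lift d b)
  | all a => all (lift (d + 1) a)

/-- Capture-avoiding substitution of the type G for the type variable d: A[G/X]. -/
def subst (d : ℕ) (G : Ty) : Ty → Ty
  | var n => if n = d then G else if n < d then var n else var (n - 1)
  | bot => bot
  | arrow a b => arrow (subst d G a) (subst d G b)
  | all a => all (subst (d + 1) (lift 0 G) a)

/-- The type variable i occurs free in the type. -/
def Free : ℕ → Ty → Prop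
  | i, var n => n = i
  | _, bot => False
  | i, arrow a b => Free i a ∨ Free i b
  | i, all a => Free (i + 1) a

/-- ¬A := A → ⊥ -/
def neg (a : Ty) : Ty := arrow a bot

end Ty

/-- Curry-style System F typing: Γ ⊢_F t : A. -/
inductive Typing : List Ty → Lam → Ty → Prop
  | var {Γ : List Ty} {n : ℕ} {A : Ty} : Γ[n]? = some A → Typing Γ (Lam.var n) A
  | lam {Γ A B t} : Typing (A :: Γ) t B → Typing Γ (Lam.lam t) (Ty.arrow A B)
  | app {Γ A B u v} : Typing Γ u (Ty.arrow A B) → Typing Γ v A →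
      Typing Γ (Lam.app u v) B
  | allI {Γ A t} : Typing (Γ.map (Ty.lift 0)) t A → Typing Γ t (Ty.all A)
  | allE {Γ A t} (G : Ty) : Typing Γ t (Ty.all A) → Typing Γ t (Ty.subst 0 G A)

/-- Minimal second-order propositional logic (the logic of System F). -/
inductive Prov : List Ty → Ty → Prop
  | ax {Γ A} : A ∈ Γ → Prov Γ A
  | arrI {Γ A B} : Prov (A :: Γ) B → Prov Γ (Ty.arrow A B)
  | arrE {Γ A B} : Prov Γ (Ty.arrow A B) → Prov Γ A → Prov Γ B
  | allI {Γ A} : Prov (Γ.map (Ty.lift 0)) A → Prov Γ (Ty.all A)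
  | allE {Γ A} (G : Ty) : Prov Γ (Ty.all A) → Prov Γ (Ty.subst 0 G A)

/-- Classical second-order propositional logic F_C: F plus double-negation elimination. -/
inductive ProvC : List Ty → Ty → Prop
  | ax {Γ A} : A ∈ Γ → ProvC Γ A
  | arrI {Γ A B} : ProvC (A :: Γ) B → ProvC Γ (Ty.arrow A B)
  | arrE {Γ A B} : ProvC Γ (Ty.arrow A B) → ProvC Γ A → ProvC Γ B
  | allI {Γ A} : ProvC (Γ.map (Ty.lift 0)) A → ProvC Γ (Ty.all A)
  | allE {Γ A} (G : Ty) : ProvC Γ (Ty.all A) → ProvC Γ (Ty.subst 0 G A)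
  | dne {Γ A} : ProvC Γ (Ty.neg (Ty.neg A)) → ProvC Γ A

/-- The Gödel translation A ↦ A*. -/
def godel : Ty → Ty
  | Ty.var n => Ty.neg (Ty.var n)
  | Ty.bot => Ty.bot
  | Ty.arrow a b => Ty.arrow (godel a) (godel b)
  | Ty.all a => Ty.all (godel a)

/-- The type of booleans B = ∀X.(X → X → X). -/
def BoolTy : Ty := Ty.all (Ty.arrow (Ty.var 0) (Ty.arrow (Ty.var 0) (Ty.var 0)))

/-- The type of Church integers N = ∀X.(X → ((X → X) → X)). -/
def NatTy : Ty :=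
  Ty.all (Ty.arrow (Ty.var 0) (Ty.arrow (Ty.arrow (Ty.var 0) (Ty.var 0)) (Ty.var 0)))

/-- Peirce's law P = ∀X∀Y.(((X → Y) → X) → X). -/
def PeirceTy : Ty :=
  Ty.all (Ty.all (Ty.arrow (Ty.arrow (Ty.arrow (Ty.var 1) (Ty.var 0)) (Ty.var 1)) (Ty.var 1)))

/-- Q = P → ∀X.X. -/
def QTy : Ty := Ty.arrow PeirceTy (Ty.all (Ty.var 0))

/-!
Tait–Girard reducibility. Interpret each type as a set of terms closed under weak head expansion
("saturated"), type variables ranging over all saturated sets; every typable term lies in the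
interpretation of its type. Interpreting the variable of `B` by the set of terms that weak-head
reduce to a variable, a term `t : B` satisfies `t (var 1) (var 0) →* var i`. A closed normal term
is `λ(neutral)` or `λλw`; weak head reduction is deterministic, so in the second case the reduction
passes through the normal term `w`, whence `w = var i` with `i < 2`, and the first case is
impossible because its reduct is stuck at an application.
-/

open Relation

section InsertAt

variable {α : Type*}

def insertAt (d : ℕ) (x : α) (f : ℕ → α) : ℕ → α :=
  fun n => if n < d then f n else if n = d then x else f (n - 1)

@[simp] lemma insertAt_zero_zero (x : α) (f : ℕ → α) : insertAt 0 x f 0 = x := rfl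

@[simp] lemma insertAt_zero_succ (x : α) (f : ℕ → α) (n : ℕ) : insertAt 0 x f (n + 1) = f n :=
  rfl

lemma insertAt_succ_insertAt_zero (d : ℕ) (x y : α) (f : ℕ → α) :
    insertAt (d + 1) x (insertAt 0 y f) = insertAt 0 y (insertAt d x f) := by
  funext n
  unfold insertAt
  rcases n with _ | n
  · simp
  · simp only [Nat.add_lt_add_iff_right, Nat.add_right_cancel_iff, Nat.add_sub_cancel,
      Nat.not_lt_zero, if_false, add_eq_zero, one_ne_zero, and_false]
    split_ifs <;> first | rfl | omega

lemma forall_insertAt {p : α → Prop} {d : ℕ} {x : α} {f : ℕ → α} (hx : p x)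
    (hf : ∀ n, p (f n)) (n : ℕ) : p (insertAt d x f n) := by
  unfold insertAt; split_ifs <;> simp only [hx, hf]

end InsertAt

namespace Lam

lemma lift_lift (s : Lam) {c d : ℕ} (h : c ≤ d) :
    lift c (lift d s) = lift (d + 1) (lift c s) := by
  induction s generalizing c d with
  | var n =>
    simp only [lift]
    split_ifs <;> simp only [lift] <;> split_ifs <;> first | rfl | omega
  | app u v ihu ihv => simp only [lift, ihu h, ihv h]
  | lam u ih => simp only [lift, ih (Nat.succ_le_succ h)]

lemma subst_lift (s v : Lam) {c d : ℕ} (h : c ≤ d) :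
    subst (d + 1) (lift c v) (lift c s) = lift c (subst d v s) := by
  induction s generalizing v c d with
  | var n =>
    simp only [lift, subst]
    split_ifs <;> simp only [lift, subst] <;> split_ifs <;>
      first | rfl | omega | (congr 1; omega)
  | app u w ihu ihw => simp only [lift, subst, ihu v h, ihw v h]
  | lam u ih =>
    simp only [lift, subst]
    rw [lift_lift v (Nat.zero_le c), ih (lift 0 v) (Nat.succ_le_succ h)]

lemma subst_lift_self (s v : Lam) (d : ℕ) : subst d v (lift d s) = s := by
  induction s generalizing v d with
  | var n =>
    simp only [lift]
    split_ifs <;> simp only [subst] <;> split_ifs <;> first | rfl | omega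
  | app u w ihu ihw => simp only [lift, subst, ihu, ihw]
  | lam u ih => simp only [lift, subst, ih]

lemma subst_var_subst_var_of_closedUnder {w : Lam} {d : ℕ} (hw : ClosedUnder (d + 2) w) :
    subst d (var d) (subst (d + 1) (var (d + 2)) w) = w := by
  induction w generalizing d with
  | var n =>
    simp only [ClosedUnder] at hw
    simp only [subst]
    split_ifs <;> simp only [subst] <;> split_ifs <;> first | rfl | omega | (congr 1; omega)
  | app u v ihu ihv => simp only [subst, ihu hw.1, ihv hw.2]
  | lam u ih => simp only [subst, lift, Nat.not_lt_zero, if_false, ih hw]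

def up (σ : ℕ → Lam) : ℕ → Lam := insertAt 0 (var 0) (lift 0 ∘ σ)

def psubst (σ : ℕ → Lam) : Lam → Lam
  | var n => σ n
  | app u v => app (psubst σ u) (psubst σ v)
  | lam u => lam (psubst (up σ) u)

lemma psubst_var (t : Lam) : psubst var t = t := by
  have hup : up var = var := by
    funext n; rcases n with _ | n <;> simp [up, lift]
  induction t with
  | var n => rfl
  | app u v ihu ihv => rw [psubst, ihu, ihv]
  | lam u ih => rw [psubst, hup, ih]

lemma subst_psubst (t : Lam) (σ : ℕ → Lam) (d : ℕ) (v : Lam) :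
    subst d v (psubst σ t) = psubst (subst d v ∘ σ) t := by
  induction t generalizing σ d v with
  | var n => rfl
  | app u w ihu ihw => simp only [psubst, subst, ihu, ihw]
  | lam u ih =>
    have hup : subst (d + 1) (lift 0 v) ∘ up σ = up (subst d v ∘ σ) := by
      funext n
      rcases n with _ | n
      · simp [up, subst]
      · exact subst_lift (σ n) v (Nat.zero_le d)
    simp only [psubst, subst, ih, hup]

lemma subst_psubst_up (σ : ℕ → Lam) (v u : Lam) :
    subst 0 v (psubst (up σ) u) = psubst (insertAt 0 v σ) u := by
  rw [subst_psubst]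
  congr 1
  funext n
  rcases n with _ | n
  · simp [up, subst]
  · exact subst_lift_self (σ n) v 0

/-- Unlike `HeadStep`, this never reduces under `λ`, so it is compatible with application on the
left, which the saturation of arrow types needs. -/
inductive WeakHeadStep : Lam → Lam → Prop
  | beta (u v : Lam) : WeakHeadStep (app (lam u) v) (subst 0 v u)
  | appL {u u' : Lam} (v : Lam) : WeakHeadStep u u' → WeakHeadStep (app u v) (app u' v)

lemma WeakHeadStep.step {s s' : Lam} (h : WeakHeadStep s s') : Step s s' := by
  induction h with
  | beta u v => exact .beta u v
  | appL v _ ih => exact .appL v ih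

lemma WeakHeadStep.rightUnique : Relator.RightUnique WeakHeadStep := by
  intro s s₁ s₂ h₁ h₂
  induction h₁ generalizing s₂ with
  | beta u v =>
    cases h₂ with
    | beta => rfl
    | appL _ h => cases h
  | appL v h ih =>
    cases h₂ with
    | beta => cases h
    | appL _ h₂ => rw [ih h₂]

lemma WeakHeadStep.reflTransGen_of_irreducible {s s' r : Lam} (h : WeakHeadStep s s')
    (hr : ∀ r', ¬ WeakHeadStep r r') (hsr : ReflTransGen WeakHeadStep s r) :
    ReflTransGen WeakHeadStep s' r := by
  rcases hsr.total_of_right_unique rightUnique (.single h) with hrs' | hs'r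
  · rw [(reflTransGen_iff_eq hr).1 hrs']
  · exact hs'r

lemma Normal.of_lam {u : Lam} (h : Normal (lam u)) : Normal u :=
  fun _ hu => h _ (.lam hu)

lemma Normal.irreducible {t : Lam} (h : Normal t) (t' : Lam) : ¬ WeakHeadStep t t' :=
  fun ht => h t' ht.step

def Neutral : Lam → Prop
  | var _ => True
  | app u _ => Neutral u
  | lam _ => False

lemma Neutral.irreducible {t : Lam} (h : Neutral t) (t' : Lam) : ¬ WeakHeadStep t t' := by
  intro ht
  induction ht with
  | beta => exact h
  | appL _ _ ih => exact ih h

lemma Neutral.subst_var {t : Lam} (h : Neutral t) (d m : ℕ) : Neutral (subst d (var m) t) := by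
  induction t with
  | var n => simp only [subst]; split_ifs <;> trivial
  | app u _ ihu _ => exact ihu h
  | lam => exact h.elim

lemma Neutral.not_closed {t : Lam} (h : Neutral t) : ¬ Closed t := by
  induction t with
  | var n => exact Nat.not_lt_zero n
  | app u _ ihu _ => exact fun hc => ihu h hc.1
  | lam => exact h.elim

lemma Normal.neutral_or_eq_lam {t : Lam} (h : Normal t) : Neutral t ∨ ∃ u, t = lam u := by
  induction t with
  | var => exact .inl trivial
  | app u v ihu _ =>
    rcases ihu (fun _ hu => h _ (.appL v hu)) with hu | ⟨w, rfl⟩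
    · exact .inl hu
    · exact (h _ (.beta w v)).elim
  | lam u => exact .inr ⟨u, rfl⟩

-- The arguments `var 1`, `var 0` are chosen so that the two β-steps give back the body.
lemma eq_Ttm_or_Ftm_of_reflTransGen {t : Lam} (hnorm : Normal t) (hcl : Closed t) {i : ℕ}
    (hred : ReflTransGen WeakHeadStep (app (app t (var 1)) (var 0)) (var i)) :
    t = Ttm ∨ t = Ftm := by
  have hvar : ∀ r, ¬ WeakHeadStep (var i) r := fun _ h => nomatch h
  obtain hne | ⟨u, rfl⟩ := hnorm.neutral_or_eq_lam
  · exact (hne.not_closed hcl).elim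
  have hu : ClosedUnder 1 u := hcl
  have hred₁ :=
    (WeakHeadStep.appL (var 0) (.beta u (var 1))).reflTransGen_of_irreducible hvar hred
  obtain hne | ⟨w, rfl⟩ := hnorm.of_lam.neutral_or_eq_lam
  · have hne' : Neutral (app (subst 0 (var 1) u) (var 0)) := hne.subst_var 0 1
    nomatch (reflTransGen_iff_eq (hne'.irreducible)).1 hred₁
  have hw : ClosedUnder 2 w := hu
  have hred₂ := (WeakHeadStep.beta _ (var 0)).reflTransGen_of_irreducible hvar hred₁
  simp only [lift, Nat.not_lt_zero, if_false, subst_var_subst_var_of_closedUnder hw] at hred₂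
  obtain rfl := (reflTransGen_iff_eq hnorm.of_lam.of_lam.irreducible).1 hred₂
  have hi : i < 2 := hw
  interval_cases i
  · exact .inr rfl
  · exact .inl rfl

end Lam

open Lam

def Saturated (S : Set Lam) : Prop :=
  ∀ ⦃s s' : Lam⦄, WeakHeadStep s s' → s' ∈ S → s ∈ S

namespace Ty

def interp : Ty → (ℕ → Set Lam) → Set Lam
  | var n, ρ => ρ n
  | bot, _ => ∅
  | arrow a b, ρ => {t | ∀ v ∈ interp a ρ, app t v ∈ interp b ρ}
  | all a, ρ => {t | ∀ S, Saturated S → t ∈ interp a (insertAt 0 S ρ)}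

lemma saturated_interp (A : Ty) {ρ : ℕ → Set Lam} (hρ : ∀ n, Saturated (ρ n)) :
    Saturated (interp A ρ) := by
  induction A generalizing ρ with
  | var n => exact hρ n
  | bot => exact fun _ _ _ h => h.elim
  | arrow a b _ ihb => exact fun s s' hs hs' v hv => ihb hρ (.appL v hs) (hs' v hv)
  | all a ih => exact fun s s' hs hs' S hS => ih (forall_insertAt hS hρ) hs (hs' S hS)

lemma interp_lift (A : Ty) (d : ℕ) (X : Set Lam) (ρ : ℕ → Set Lam) :
    interp (lift d A) (insertAt d X ρ) = interp A ρ := by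
  induction A generalizing d ρ with
  | var n =>
    simp only [lift]
    split_ifs <;> simp only [interp, insertAt] <;> split_ifs <;> first | rfl | omega
  | bot => rfl
  | arrow a b iha ihb => simp only [lift, interp, iha, ihb]
  | all a ih => simp only [lift, interp, ← insertAt_succ_insertAt_zero, ih]

lemma interp_subst (A : Ty) (d : ℕ) (G : Ty) (ρ : ℕ → Set Lam) :
    interp (subst d G A) ρ = interp A (insertAt d (interp G ρ) ρ) := by
  induction A generalizing d G ρ with
  | var n =>
    simp only [subst]
    split_ifs <;> simp only [interp, insertAt] <;> split_ifs <;> first | rfl | omega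
  | bot => rfl
  | arrow a b iha ihb => simp only [subst, interp, iha, ihb]
  | all a ih => simp only [subst, interp, ih, interp_lift, insertAt_succ_insertAt_zero]

end Ty

open Ty

theorem Typing.psubst_mem_interp {Γ : List Ty} {t : Lam} {A : Ty} (h : Typing Γ t A)
    {ρ : ℕ → Set Lam} (hρ : ∀ n, Saturated (ρ n)) {σ : ℕ → Lam}
    (hσ : ∀ n B, Γ[n]? = some B → σ n ∈ interp B ρ) : psubst σ t ∈ interp A ρ := by
  induction h generalizing ρ σ with
  | var hB => exact hσ _ _ hB
  | @lam Γ A B t _ ih =>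
    intro v hv
    refine saturated_interp B hρ (.beta _ v) ?_
    rw [subst_psubst_up]
    refine ih hρ fun n B' hB' => ?_
    rcases n with _ | n
    · obtain rfl : A = B' := by simpa using hB'
      exact hv
    · exact hσ n B' hB'
  | app _ _ ihu ihv => exact ihu hρ hσ _ (ihv hρ hσ)
  | allI _ ih =>
    intro S hS
    refine ih (forall_insertAt hS hρ) fun n B hB => ?_
    rw [List.getElem?_map, Option.map_eq_some_iff] at hB
    obtain ⟨B₀, hB₀, rfl⟩ := hB
    rw [interp_lift]
    exact hσ n B₀ hB₀
  | allE G _ ih =>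
    rw [interp_subst]
    exact ih hρ hσ _ (saturated_interp G hρ)

lemma Typing.app_app_mem_of_bool {t : Lam} (h : Typing [] t BoolTy) {S : Set Lam}
    (hS : Saturated S) {a b : Lam} (ha : a ∈ S) (hb : b ∈ S) :
    Lam.app (Lam.app t a) b ∈ S := by
  have := h.psubst_mem_interp (ρ := fun _ => S) (fun _ => hS) (σ := Lam.var) (by simp)
  rw [psubst_var] at this
  exact this S hS a ha b hb

/-- A closed normal term has type B = ∀X.(X → X → X) iff it is
λx.λy.x or λx.λy.y. -/
theorem systemF_bool_characterization {t : Lam}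
    (hnorm : Lam.Normal t) (hcl : Lam.Closed t) :
    Typing [] t BoolTy ↔ t = Lam.Ttm ∨ t = Lam.Ftm := by
  constructor
  · intro ht
    have hsat : Saturated {s | ∃ i, ReflTransGen WeakHeadStep s (var i)} :=
      fun _ _ hs ⟨i, hi⟩ => ⟨i, .head hs hi⟩
    obtain ⟨i, hi⟩ := ht.app_app_mem_of_bool hsat ⟨1, .refl⟩ ⟨0, .refl⟩
    exact eq_Ttm_or_Ftm_of_reflTransGen hnorm hcl hi
  · rintro (rfl | rfl) <;> exact .allI (.lam (.lam (.var rfl)))
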